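/- (Theorem 4: the backward simulation distance bounds the loss of backward safety.) Let H ⊆ V, let Pre, Post be sets of states, and let R, R_att be binary relations on states (the semantics of the original and of the attacked system) such that W = WP(R, Post) is H-determined. Suppose (i) r = inf{SDist(σ, W) | σ ∈ Pre} with r ∈ ℝ, r > 0, and (ii) R_att and R are at backward simulation distance dd with respect to Post and H, where 0 ≤ dd < r, i.e., for every state σ₁ from which R_att can reach a state outside Post (∃ν₁ ∉ Post with (σ₁, ν₁) ∈ R_att) there exists a state σ₂ from which R can reach a state outside Post (∃ν₂ ∉ Post with (σ₂, ν₂) ∈ R) such that d_H(σ₁, σ₂) ≤ dd. Then inf{SDist(σ, WP(R_att, Post)) | σ ∈ Pre} ≥ r − dd; in particular the degree of backward safety lost due to the attack is at most dd, so the backward robustness ratio δ satisfies δ ≥ (r − dd)/r. -/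

import Mathlib

/-!
For `σ ∈ Pre`, `SDist σ W ≥ r > 0` with `W = WP R Post` means `σ ∈ W` and every state outside `W` is at
distance at least `r` from `σ`. A state `σ₁` outside `WP Ratt Post` lies within `dd` (in `d_H`) of some
`σ₂ ∉ W`. Splicing `σ₂` on `H` into `σ` gives a state still outside `W`, because `W` is `H`-determined,
at distance exactly `d_H(σ, σ₂)` from `σ`; hence `r ≤ d_H(σ, σ₂) ≤ d(σ, σ₁) + dd`.
-/

open scoped BigOperators Classical

variable {V : Type*} [Fintype V]

/-- Euclidean distance between states restricted to the variables in `H`. -/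
noncomputable def distH (H : Finset V) (σ σ' : V → ℝ) : ℝ :=
  Real.sqrt (∑ x ∈ H, (σ x - σ' x) ^ 2)

/-- Signed distance of a state to a set of states with respect to a
distance function `δ`, valued in ℝ ∪ {−∞, +∞}. -/
noncomputable def SDistGen (δ : (V → ℝ) → (V → ℝ) → ℝ)
    (σ : V → ℝ) (A : Set (V → ℝ)) : EReal :=
  if σ ∈ A then sInf ((fun σ' => ((δ σ σ' : ℝ) : EReal)) '' Aᶜ)
  else - sInf ((fun σ' => ((δ σ σ' : ℝ) : EReal)) '' A)

/-- Signed distance with respect to the full Euclidean distance. -/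
noncomputable def SDist (σ : V → ℝ) (A : Set (V → ℝ)) : EReal :=
  SDistGen (distH (Finset.univ : Finset V)) σ A

/-- Weakest precondition of a relation with respect to a postcondition. -/
def WP (R : (V → ℝ) → (V → ℝ) → Prop) (B : Set (V → ℝ)) : Set (V → ℝ) :=
  {σ | ∀ ν, R σ ν → ν ∈ B}

section

omit [Fintype V]

def IsDetermined (H : Finset V) (A : Set (V → ℝ)) : Prop :=
  ∀ σ σ' : V → ℝ, (∀ x ∈ H, σ x = σ' x) → (σ ∈ A ↔ σ' ∈ A)

lemma IsDetermined.piecewise_mem_iff {H : Finset V} {A : Set (V → ℝ)} (hA : IsDetermined H A)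
    (τ σ : V → ℝ) : H.piecewise τ σ ∈ A ↔ τ ∈ A :=
  hA _ _ fun _ hx => H.piecewise_eq_of_mem _ _ hx

lemma notMem_WP_iff {R : (V → ℝ) → (V → ℝ) → Prop} {B : Set (V → ℝ)} {σ : V → ℝ} :
    σ ∉ WP R B ↔ ∃ ν ∉ B, R σ ν := by
  simp only [WP, Set.mem_ofPred_eq, not_forall, exists_prop, and_comm]

lemma distH_eq_dist (H : Finset V) (σ σ' : V → ℝ) :
    distH H σ σ' =
      dist (WithLp.toLp 2 fun x : H => σ x) (WithLp.toLp 2 fun x : H => σ' x) := by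
  rw [EuclideanSpace.dist_eq, distH, ← Finset.sum_coe_sort H]
  simp [Real.dist_eq, sq_abs]

lemma distH_nonneg (H : Finset V) (σ σ' : V → ℝ) : 0 ≤ distH H σ σ' :=
  Real.sqrt_nonneg _

lemma distH_self (H : Finset V) (σ : V → ℝ) : distH H σ σ = 0 := by
  simp [distH]

lemma distH_triangle (H : Finset V) (σ₁ σ₂ σ₃ : V → ℝ) :
    distH H σ₁ σ₃ ≤ distH H σ₁ σ₂ + distH H σ₂ σ₃ := by
  simp only [distH_eq_dist]
  exact dist_triangle _ _ _

lemma distH_mono {H K : Finset V} (hHK : H ⊆ K) (σ σ' : V → ℝ) :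
    distH H σ σ' ≤ distH K σ σ' :=
  Real.sqrt_le_sqrt <|
    Finset.sum_le_sum_of_subset_of_nonneg hHK fun _ _ _ => sq_nonneg _

lemma distH_piecewise (H K : Finset V) (hHK : H ⊆ K) (σ τ : V → ℝ) :
    distH K σ (H.piecewise τ σ) = distH H σ τ := by
  unfold distH
  congr 1
  refine (Finset.sum_subset hHK fun x _ hx => ?_).symm.trans
    (Finset.sum_congr rfl fun x hx => ?_)
  · simp [H.piecewise_eq_of_notMem _ _ hx]
  · rw [H.piecewise_eq_of_mem _ _ hx]

lemma coe_le_SDistGen_iff {δ : (V → ℝ) → (V → ℝ) → ℝ} (hδ : ∀ σ σ', 0 ≤ δ σ σ')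
    {r : ℝ} (hr : 0 < r) {σ : V → ℝ} {A : Set (V → ℝ)} :
    (r : EReal) ≤ SDistGen δ σ A ↔ σ ∈ A ∧ ∀ σ' ∉ A, r ≤ δ σ σ' := by
  unfold SDistGen
  split_ifs with hσ
  · simp [hσ, le_sInf_iff]
  · simp only [hσ, false_and, iff_false, not_le]
    have hnonneg : (0 : EReal) ≤ sInf ((fun σ' => ((δ σ σ' : ℝ) : EReal)) '' A) :=
      le_sInf <| Set.forall_mem_image.2 fun σ' _ => EReal.coe_nonneg.2 (hδ σ σ')
    calc -sInf ((fun σ' => ((δ σ σ' : ℝ) : EReal)) '' A) ≤ 0 := by simpa using hnonneg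
      _ < r := EReal.coe_pos.2 hr

end

lemma sub_le_distH_of_backward_simulation {H : Finset V} {W Watt : Set (V → ℝ)}
    (hW : IsDetermined H W) {r dd : ℝ} {σ : V → ℝ}
    (hfar : ∀ σ' ∉ W, r ≤ distH Finset.univ σ σ')
    (hsim : ∀ σ₁ ∉ Watt, ∃ σ₂ ∉ W, distH H σ₁ σ₂ ≤ dd) :
    ∀ σ₁ ∉ Watt, r - dd ≤ distH Finset.univ σ σ₁ := by
  intro σ₁ hσ₁
  obtain ⟨σ₂, hσ₂, hclose⟩ := hsim σ₁ hσ₁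
  have hsplice : r ≤ distH H σ σ₂ := by
    rw [← distH_piecewise H Finset.univ H.subset_univ]
    exact hfar _ (mt (hW.piecewise_mem_iff σ₂ σ).1 hσ₂)
  have htriangle := distH_triangle H σ σ₁ σ₂
  have hmono := distH_mono H.subset_univ σ σ₁
  linarith

theorem backward_simulation_distance_bounds_backward_safety_loss_general
    (H : Finset V) (Pre Post : Set (V → ℝ))
    (R Ratt : (V → ℝ) → (V → ℝ) → Prop)
    (hdet : ∀ σ σ' : V → ℝ, (∀ x ∈ H, σ x = σ' x) →
      (σ ∈ WP R Post ↔ σ' ∈ WP R Post))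
    (r dd : ℝ) (hr : 0 < r) (hddr : dd < r)
    (hsafe : sInf ((fun σ => SDist σ (WP R Post)) '' Pre) = (r : EReal))
    (hsim : ∀ σ₁ : V → ℝ, (∃ ν₁ ∉ Post, Ratt σ₁ ν₁) →
      ∃ σ₂ : V → ℝ, (∃ ν₂ ∉ Post, R σ₂ ν₂) ∧ distH H σ₁ σ₂ ≤ dd) :
    ((r - dd : ℝ) : EReal) ≤ sInf ((fun σ => SDist σ (WP Ratt Post)) '' Pre) ∧
    (∀ r₁ : ℝ, sInf ((fun σ => SDist σ (WP Ratt Post)) '' Pre) = (r₁ : EReal) →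
      (r - dd) / r ≤ r₁ / r) := by
  have hsim' : ∀ σ₁ ∉ WP Ratt Post, ∃ σ₂ ∉ WP R Post, distH H σ₁ σ₂ ≤ dd := by
    simpa only [notMem_WP_iff] using hsim
  have hfar : ∀ σ ∈ Pre, ∀ σ' ∉ WP R Post, r ≤ distH Finset.univ σ σ' := fun σ hσ =>
    ((coe_le_SDistGen_iff (distH_nonneg _) hr).1
      (hsafe ▸ sInf_le (Set.mem_image_of_mem _ hσ))).2
  have hbound : ((r - dd : ℝ) : EReal) ≤ sInf ((fun σ => SDist σ (WP Ratt Post)) '' Pre) := by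
    refine le_sInf <| Set.forall_mem_image.2 fun σ hσ => ?_
    have hfar_att := sub_le_distH_of_backward_simulation hdet (hfar σ hσ) hsim'
    refine (coe_le_SDistGen_iff (distH_nonneg _) (sub_pos.2 hddr)).2 ⟨?_, hfar_att⟩
    by_contra hσatt
    have hself := hfar_att σ hσatt
    rw [distH_self] at hself
    linarith
  refine ⟨hbound, fun r₁ hr₁ => div_le_div_of_nonneg_right ?_ hr.le⟩
  exact_mod_cast hr₁ ▸ hbound

theorem backward_simulation_distance_bounds_backward_safety_loss
    (H : Finset V) (Pre Post : Set (V → ℝ))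
    (R Ratt : (V → ℝ) → (V → ℝ) → Prop)
    (hdet : ∀ σ σ' : V → ℝ, (∀ x ∈ H, σ x = σ' x) →
      (σ ∈ WP R Post ↔ σ' ∈ WP R Post))
    (r dd : ℝ) (hr : 0 < r) (hdd : 0 ≤ dd) (hddr : dd < r)
    (hsafe : sInf ((fun σ => SDist σ (WP R Post)) '' Pre) = (r : EReal))
    (hsim : ∀ σ₁ : V → ℝ, (∃ ν₁ ∉ Post, Ratt σ₁ ν₁) →
      ∃ σ₂ : V → ℝ, (∃ ν₂ ∉ Post, R σ₂ ν₂) ∧ distH H σ₁ σ₂ ≤ dd) :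
    ((r - dd : ℝ) : EReal) ≤ sInf ((fun σ => SDist σ (WP Ratt Post)) '' Pre) ∧
    (∀ r₁ : ℝ, sInf ((fun σ => SDist σ (WP Ratt Post)) '' Pre) = (r₁ : EReal) →
      (r - dd) / r ≤ r₁ / r) :=
  backward_simulation_distance_bounds_backward_safety_loss_general H Pre Post R Ratt hdet r dd hr
    hddr hsafe hsim
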